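/- arXiv:2512.13034 — 3 statements merged into one kernel-verified Lean document; each statement's English description precedes it below -/
import Mathlib

section
/- Let A ∈ ℝ^{m×n}, let q ∈ ℝ^n be a nonzero vector, let p ∈ ℝ^m, and let β ∈ [0,1]. Define p⁺ = β p + (1−β) (A q)/‖q‖². Then ‖A − p⁺ qᵀ‖_F ≤ ‖A − p qᵀ‖_F. (This is the even-iteration case of Proposition 1: the alternating update of the left factor does not increase the rank-one factorization error.) -/
/-! Row by row, Pythagoras gives `‖a - x q‖² = ‖a - c q‖² + ‖q‖² (x - c)²`, where `c` is the
least-squares coefficient of the row `a` along `q`. The update replaces each row coefficient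
`pᵢ` by `β pᵢ + (1 - β) c`, which is `β`-times closer to `c`, so no row error grows. -/

open Matrix Finset

/-- Frobenius norm of a real matrix: square root of the sum of squares of all entries. -/
noncomputable def frobNorm {m n : ℕ} (A : Matrix (Fin m) (Fin n) ℝ) : ℝ :=
  Real.sqrt (∑ i, ∑ j, (A i j) ^ 2)

/-- Squared Euclidean 2-norm of a vector: `sqNorm v = ‖v‖²`. -/
def sqNorm {k : ℕ} (v : Fin k → ℝ) : ℝ := ∑ i, (v i) ^ 2

section LeastSquares

variable {ι : Type*} [Fintype ι]

/-- Least-squares coefficient of `a` along `q`; junk value `0` when `q = 0`. -/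
noncomputable def projCoeff (a q : ι → ℝ) : ℝ := (q ⬝ᵥ q)⁻¹ * (a ⬝ᵥ q)

theorem dotProduct_sub_smul_self (a q : ι → ℝ) (x : ℝ) :
    (a - x • q) ⬝ᵥ (a - x • q) = a ⬝ᵥ a - 2 * x * (a ⬝ᵥ q) + x ^ 2 * (q ⬝ᵥ q) := by
  simp only [sub_dotProduct, dotProduct_sub, smul_dotProduct, dotProduct_smul, smul_eq_mul,
    dotProduct_comm q a]
  ring

theorem dotProduct_sub_smul_self_eq_projCoeff_add (a q : ι → ℝ) (hq : q ⬝ᵥ q ≠ 0) (x : ℝ) :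
    (a - x • q) ⬝ᵥ (a - x • q) =
      (a - projCoeff a q • q) ⬝ᵥ (a - projCoeff a q • q) + (q ⬝ᵥ q) * (x - projCoeff a q) ^ 2 := by
  rw [dotProduct_sub_smul_self, dotProduct_sub_smul_self, projCoeff]
  field_simp
  ring

theorem dotProduct_sub_smul_self_le_of_abs_sub_projCoeff_le (a q : ι → ℝ) {x c : ℝ}
    (h : |x - projCoeff a q| ≤ |c - projCoeff a q|) :
    (a - x • q) ⬝ᵥ (a - x • q) ≤ (a - c • q) ⬝ᵥ (a - c • q) := by
  rcases eq_or_ne q 0 with rfl | hq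
  · simp
  have hs : 0 < q ⬝ᵥ q := lt_of_le_of_ne (Finset.sum_nonneg fun i _ => mul_self_nonneg (q i))
    (Ne.symm (dotProduct_self_eq_zero.not.mpr hq))
  rw [dotProduct_sub_smul_self_eq_projCoeff_add a q hs.ne' x,
    dotProduct_sub_smul_self_eq_projCoeff_add a q hs.ne' c]
  gcongr _ + _ * ?_
  exact sq_le_sq.mpr h

end LeastSquares

theorem sqNorm_eq_dotProduct {k : ℕ} (v : Fin k → ℝ) : sqNorm v = v ⬝ᵥ v := by
  simp only [sqNorm, dotProduct, sq]

theorem frobNorm_eq_sqrt_sum_dotProduct {m n : ℕ} (A : Matrix (Fin m) (Fin n) ℝ) :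
    frobNorm A = Real.sqrt (∑ i, A i ⬝ᵥ A i) := by
  simp only [frobNorm, dotProduct, sq]

theorem sub_vecMulVec_row {m n : Type*} (A : Matrix m n ℝ) (w : m → ℝ) (q : n → ℝ) (i : m) :
    (A - vecMulVec w q) i = A i - w i • q := by
  ext j
  simp [vecMulVec_apply]

theorem alada_even_update_decreases_error_general {m n : ℕ}
    (A : Matrix (Fin m) (Fin n) ℝ) (q : Fin n → ℝ)
    (p : Fin m → ℝ) (β : ℝ) (hβ0 : 0 ≤ β) (hβ1 : β ≤ 1) :
    frobNorm (A - Matrix.vecMulVec (β • p + (1 - β) • ((sqNorm q)⁻¹ • A.mulVec q)) q)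
      ≤ frobNorm (A - Matrix.vecMulVec p q) := by
  simp only [frobNorm_eq_sqrt_sum_dotProduct, sub_vecMulVec_row]
  refine Real.sqrt_le_sqrt (Finset.sum_le_sum fun i _ => ?_)
  apply dotProduct_sub_smul_self_le_of_abs_sub_projCoeff_le
  have hupdate : (β • p + (1 - β) • ((sqNorm q)⁻¹ • A *ᵥ q)) i
      = β * p i + (1 - β) * projCoeff (A i) q := by
    simp [projCoeff, sqNorm_eq_dotProduct, mulVec]
  rw [hupdate, show ∀ c, β * p i + (1 - β) * c - c = β * (p i - c) from fun c => by ring,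
    abs_mul, abs_of_nonneg hβ0]
  exact mul_le_of_le_one_left (abs_nonneg _) hβ1

/-- Even-iteration case of Proposition 1: updating the left factor
`p⁺ = β p + (1−β) (A q)/‖q‖²` does not increase the rank-one factorization error. -/
theorem alada_even_update_decreases_error {m n : ℕ}
    (A : Matrix (Fin m) (Fin n) ℝ) (q : Fin n → ℝ) (hq : q ≠ 0)
    (p : Fin m → ℝ) (β : ℝ) (hβ0 : 0 ≤ β) (hβ1 : β ≤ 1) :
    frobNorm (A - Matrix.vecMulVec (β • p + (1 - β) • ((sqNorm q)⁻¹ • A.mulVec q)) q)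
      ≤ frobNorm (A - Matrix.vecMulVec p q) :=
  alada_even_update_decreases_error_general A q p β hβ0 hβ1
end

section
/- Let A ∈ ℝ^{m×n}, let q ∈ ℝ^n be nonzero, let p ∈ ℝ^m, let β ∈ [0,1], and set p* = (A q)/‖q‖² and p⁺ = β p + (1−β) p*. Then the following exact identity holds: ‖A − p⁺ qᵀ‖_F² = ‖A − p* qᵀ‖_F² + β² ‖q‖² ‖p − p*‖². In particular, if p ≠ p* and β < 1, the factorization error strictly decreases: ‖A − p⁺ qᵀ‖_F < ‖A − p qᵀ‖_F. -/
/-! The residual `a - s q` of the least-squares coefficient `s = ⟪a, q⟫ / ‖q‖²` is orthogonal to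
`q`, so Pythagoras gives `‖a - t q‖² = ‖a - s q‖² + (t - s)² ‖q‖²` for every `t`. Applied to each
row of `A` this yields `‖A - v qᵀ‖_F² = ‖A - p* qᵀ‖_F² + ‖q‖² ‖v - p*‖²` for every `v`. Since
`p⁺ - p* = β (p - p*)`, the identity follows with `v = p⁺`, and comparing with `v = p` gives
the strict decrease when `β² < 1`. -/

open Matrix Finset

lemma sqNorm_pos {k : ℕ} {v : Fin k → ℝ} (hv : v ≠ 0) : 0 < sqNorm v := by
  obtain ⟨i, hi⟩ : ∃ i, v i ≠ 0 := Function.ne_iff.mp hv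
  exact (by positivity : 0 < v i ^ 2).trans_le
    (single_le_sum (fun j _ => sq_nonneg (v j)) (mem_univ i))

lemma sqNorm_smul {k : ℕ} (c : ℝ) (v : Fin k → ℝ) : sqNorm (c • v) = c ^ 2 * sqNorm v := by
  simp only [sqNorm, Pi.smul_apply, smul_eq_mul, mul_pow, mul_sum]

lemma sqNorm_sub_smul_eq_of_mul_eq_dotProduct {k : ℕ} {a q : Fin k → ℝ} {s : ℝ}
    (hs : sqNorm q * s = a ⬝ᵥ q) (t : ℝ) :
    sqNorm (a - t • q) = sqNorm (a - s • q) + (t - s) ^ 2 * sqNorm q := by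
  have expand : ∀ j, (a j - t * q j) ^ 2
      = (a j - s * q j) ^ 2 + (t - s) ^ 2 * q j ^ 2 - 2 * (t - s) * (a j * q j - s * q j ^ 2) :=
    fun j => by ring
  have cross : ∑ j, (a j * q j - s * q j ^ 2) = 0 := by
    rw [sum_sub_distrib, ← mul_sum, ← sqNorm, mul_comm s, hs, dotProduct, sub_self]
  simp only [sqNorm, Pi.sub_apply, Pi.smul_apply, smul_eq_mul, expand, sum_sub_distrib,
    sum_add_distrib, ← mul_sum, cross, mul_zero, sub_zero]

lemma frobNorm_sq_eq_sum_sqNorm {m n : ℕ} (A : Matrix (Fin m) (Fin n) ℝ) :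
    frobNorm A ^ 2 = ∑ i, sqNorm (A i) :=
  Real.sq_sqrt (sum_nonneg fun _ _ => sum_nonneg fun _ _ => sq_nonneg _)

lemma frobNorm_sq_sub_vecMulVec_eq {m n : ℕ} {A : Matrix (Fin m) (Fin n) ℝ} {q : Fin n → ℝ}
    {pstar : Fin m → ℝ} (hpstar : sqNorm q • pstar = A *ᵥ q) (v : Fin m → ℝ) :
    frobNorm (A - vecMulVec v q) ^ 2
      = frobNorm (A - vecMulVec pstar q) ^ 2 + sqNorm q * sqNorm (v - pstar) := by
  have row : ∀ i, sqNorm ((A - vecMulVec v q) i)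
      = sqNorm ((A - vecMulVec pstar q) i) + sqNorm q * (v i - pstar i) ^ 2 := fun i => by
    change sqNorm (A i - v i • q) = sqNorm (A i - pstar i • q) + _
    rw [sqNorm_sub_smul_eq_of_mul_eq_dotProduct (congrFun hpstar i), mul_comm]
  rw [frobNorm_sq_eq_sum_sqNorm, frobNorm_sq_eq_sum_sqNorm, sum_congr rfl fun i _ => row i,
    sum_add_distrib, sqNorm.eq_1 (v - pstar), mul_sum]
  rfl

theorem alada_left_update_exact_identity_general {m n : ℕ}
    (A : Matrix (Fin m) (Fin n) ℝ) (q : Fin n → ℝ) (hq : q ≠ 0)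
    (p : Fin m → ℝ) (β : ℝ) (hβ0 : 0 ≤ β) :
    ∀ pstar : Fin m → ℝ, pstar = (sqNorm q)⁻¹ • A.mulVec q →
    ∀ pplus : Fin m → ℝ, pplus = β • p + (1 - β) • pstar →
      frobNorm (A - Matrix.vecMulVec pplus q) ^ 2
        = frobNorm (A - Matrix.vecMulVec pstar q) ^ 2
          + β ^ 2 * sqNorm q * sqNorm (p - pstar) ∧
      (p ≠ pstar → β < 1 →
        frobNorm (A - Matrix.vecMulVec pplus q)
          < frobNorm (A - Matrix.vecMulVec p q)) := by
  intro pstar hpstar pplus hpplus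
  have hq2 : 0 < sqNorm q := sqNorm_pos hq
  have normal : sqNorm q • pstar = A *ᵥ q := by rw [hpstar, smul_inv_smul₀ hq2.ne']
  have hdiff : pplus - pstar = β • (p - pstar) := by rw [hpplus]; module
  have identity : frobNorm (A - vecMulVec pplus q) ^ 2
      = frobNorm (A - vecMulVec pstar q) ^ 2 + β ^ 2 * sqNorm q * sqNorm (p - pstar) := by
    rw [frobNorm_sq_sub_vecMulVec_eq normal, hdiff, sqNorm_smul]
    ring
  refine ⟨identity, fun hne hβ => ?_⟩
  have hgap : 0 < sqNorm q * sqNorm (p - pstar) := mul_pos hq2 (sqNorm_pos (sub_ne_zero_of_ne hne))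
  have hβ2 : β ^ 2 < 1 := pow_lt_one₀ hβ0 hβ two_ne_zero
  refine lt_of_pow_lt_pow_left₀ 2 (Real.sqrt_nonneg _) ?_
  rw [identity, frobNorm_sq_sub_vecMulVec_eq normal p, mul_assoc]
  exact add_lt_add_right (mul_lt_of_lt_one_left hgap hβ2) _

/-- Exact error identity for the Alada left-factor update: with `p* = (A q)/‖q‖²` and
`p⁺ = β p + (1−β) p*`, one has
`‖A − p⁺ qᵀ‖_F² = ‖A − p* qᵀ‖_F² + β² ‖q‖² ‖p − p*‖²`; in particular, if `p ≠ p*`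
and `β < 1`, the factorization error strictly decreases. -/
theorem alada_left_update_exact_identity {m n : ℕ}
    (A : Matrix (Fin m) (Fin n) ℝ) (q : Fin n → ℝ) (hq : q ≠ 0)
    (p : Fin m → ℝ) (β : ℝ) (hβ0 : 0 ≤ β) (hβ1 : β ≤ 1) :
    ∀ pstar : Fin m → ℝ, pstar = (sqNorm q)⁻¹ • A.mulVec q →
    ∀ pplus : Fin m → ℝ, pplus = β • p + (1 - β) • pstar →
      frobNorm (A - Matrix.vecMulVec pplus q) ^ 2
        = frobNorm (A - Matrix.vecMulVec pstar q) ^ 2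
          + β ^ 2 * sqNorm q * sqNorm (p - pstar) ∧
      (p ≠ pstar → β < 1 →
        frobNorm (A - Matrix.vecMulVec pplus q)
          < frobNorm (A - Matrix.vecMulVec p q)) :=
  alada_left_update_exact_identity_general A q hq p β hβ0
end

section
/- (Proposition 1, combined form.) Let β₂ ∈ [0,1) and let (A_t)_{t≥0} be matrices in ℝ^{m×n}. Let (p_t) in ℝ^m and (q_t) in ℝ^n be sequences with p_t, q_t nonzero for all t that follow the alternating adaptation rule: for even t, p_{t+1} = β₂ p_t + (1−β₂)(A_t q_t)/‖q_t‖² and q_{t+1} = q_t; for odd t, p_{t+1} = p_t and q_{t+1} = β₂ q_t + (1−β₂)(A_tᵀ p_t)/‖p_t‖². Then the reconstructed momenta U_t = p_t q_tᵀ satisfy, for every t ≥ 0, ‖A_t − U_{t+1}‖_F ≤ ‖A_t − U_t‖_F. -/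
open Matrix Finset

/-! For fixed `q ≠ 0`, each row of `‖A - p qᵀ‖_F²` is the convex quadratic
`‖q‖² (p i - c i)² + const` in `p i`, minimised at `c = A q / ‖q‖²`. The update
`β p + (1 - β) c` multiplies `p - c` by `β`, so with `|β| ≤ 1` it cannot increase any row.
The update of `q` is the update of `p` for the transposed matrix. -/

lemma relax_toward_minimizer_le {s β : ℝ} (hs : 0 ≤ s) (hβ : |β| ≤ 1) (x c : ℝ) :
    s * (β * x + (1 - β) * c) ^ 2 - 2 * (s * c) * (β * x + (1 - β) * c)
      ≤ s * x ^ 2 - 2 * (s * c) * x := by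
  have hβ2 : β ^ 2 ≤ 1 := (sq_le_one_iff_abs_le_one β).2 hβ
  -- the difference of the two sides is `s (β² - 1) (x - c)²`
  nlinarith [mul_nonneg (mul_nonneg hs (sub_nonneg.2 hβ2)) (sq_nonneg (x - c))]

lemma sqNorm_nonneg {k : ℕ} (v : Fin k → ℝ) : 0 ≤ sqNorm v :=
  Finset.sum_nonneg fun i _ => sq_nonneg (v i)

lemma sqNorm_eq_zero_iff {k : ℕ} {v : Fin k → ℝ} : sqNorm v = 0 ↔ v = 0 := by
  simp only [sqNorm, Finset.sum_eq_zero_iff_of_nonneg fun i _ => sq_nonneg (v i),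
    Finset.mem_univ, true_implies, pow_eq_zero_iff two_ne_zero, funext_iff, Pi.zero_apply]

lemma sum_sub_mul_sq {n : ℕ} (a q : Fin n → ℝ) (x : ℝ) :
    ∑ j, (a j - x * q j) ^ 2 = ∑ j, a j ^ 2 - 2 * (a ⬝ᵥ q) * x + sqNorm q * x ^ 2 := by
  have h : ∀ j ∈ Finset.univ, (a j - x * q j) ^ 2
      = a j ^ 2 - 2 * (a j * q j) * x + q j ^ 2 * x ^ 2 := fun j _ => by ring
  simp only [Finset.sum_congr rfl h, Finset.sum_add_distrib, Finset.sum_sub_distrib, sqNorm,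
    dotProduct, ← Finset.sum_mul, ← Finset.mul_sum]

lemma frobNorm_transpose {m n : ℕ} (A : Matrix (Fin m) (Fin n) ℝ) :
    frobNorm Aᵀ = frobNorm A := by
  unfold frobNorm
  rw [Finset.sum_comm]
  rfl

lemma frobNorm_sub_vecMulVec_relax_le {m n : ℕ} (A : Matrix (Fin m) (Fin n) ℝ)
    (p : Fin m → ℝ) (q : Fin n → ℝ) {β : ℝ} (hβ : |β| ≤ 1) :
    frobNorm (A - vecMulVec (β • p + (1 - β) • ((sqNorm q)⁻¹ • A *ᵥ q)) q)
      ≤ frobNorm (A - vecMulVec p q) := by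
  by_cases hq : q = 0
  · have hzero : ∀ p' : Fin m → ℝ, vecMulVec p' q = 0 := fun p' => by
      ext i j
      simp [hq, vecMulVec_apply]
    rw [hzero, hzero]
  have hs : sqNorm q ≠ 0 := mt sqNorm_eq_zero_iff.1 hq
  unfold frobNorm
  refine Real.sqrt_le_sqrt (Finset.sum_le_sum fun i _ => ?_)
  have hrow : A i ⬝ᵥ q = sqNorm q * ((sqNorm q)⁻¹ * (A *ᵥ q) i) := by
    rw [mul_inv_cancel_left₀ hs]
    rfl
  simp only [Matrix.sub_apply, vecMulVec_apply, Pi.add_apply, Pi.smul_apply, smul_eq_mul]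
  rw [sum_sub_mul_sq, sum_sub_mul_sq, hrow]
  linarith [relax_toward_minimizer_le (sqNorm_nonneg q) hβ (p i) ((sqNorm q)⁻¹ * (A *ᵥ q) i)]

theorem alada_alternating_error_monotone_general {m n : ℕ}
    (β₂ : ℝ) (hβ₂0 : 0 ≤ β₂) (hβ₂1 : β₂ < 1)
    (A : ℕ → Matrix (Fin m) (Fin n) ℝ)
    (p : ℕ → Fin m → ℝ) (q : ℕ → Fin n → ℝ)
    (heven : ∀ t, Even t →
      p (t + 1) = β₂ • p t + (1 - β₂) • ((sqNorm (q t))⁻¹ • (A t).mulVec (q t)) ∧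
      q (t + 1) = q t)
    (hodd : ∀ t, Odd t →
      p (t + 1) = p t ∧
      q (t + 1) = β₂ • q t + (1 - β₂) • ((sqNorm (p t))⁻¹ • (A t)ᵀ.mulVec (p t))) :
    ∀ t, frobNorm (A t - Matrix.vecMulVec (p (t + 1)) (q (t + 1)))
      ≤ frobNorm (A t - Matrix.vecMulVec (p t) (q t)) := by
  intro t
  have hβ : |β₂| ≤ 1 := abs_le.2 ⟨by linarith, hβ₂1.le⟩
  rcases Nat.even_or_odd t with ht | ht
  · obtain ⟨hp_succ, hq_succ⟩ := heven t ht
    rw [hp_succ, hq_succ]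
    exact frobNorm_sub_vecMulVec_relax_le (A t) (p t) (q t) hβ
  · obtain ⟨hp_succ, hq_succ⟩ := hodd t ht
    rw [hp_succ, hq_succ, ← frobNorm_transpose, ← frobNorm_transpose (A t - _),
      transpose_sub, transpose_sub, transpose_vecMulVec, transpose_vecMulVec]
    exact frobNorm_sub_vecMulVec_relax_le (A t)ᵀ (q t) (p t) hβ

/-- Proposition 1 (combined form): under the alternating adaptation rule, the
reconstructed momenta `U_t = p_t q_tᵀ` satisfy
`‖A_t − U_{t+1}‖_F ≤ ‖A_t − U_t‖_F` for every `t`. -/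
theorem alada_alternating_error_monotone {m n : ℕ}
    (β₂ : ℝ) (hβ₂0 : 0 ≤ β₂) (hβ₂1 : β₂ < 1)
    (A : ℕ → Matrix (Fin m) (Fin n) ℝ)
    (p : ℕ → Fin m → ℝ) (q : ℕ → Fin n → ℝ)
    (hp : ∀ t, p t ≠ 0) (hq : ∀ t, q t ≠ 0)
    (heven : ∀ t, Even t →
      p (t + 1) = β₂ • p t + (1 - β₂) • ((sqNorm (q t))⁻¹ • (A t).mulVec (q t)) ∧
      q (t + 1) = q t)
    (hodd : ∀ t, Odd t →
      p (t + 1) = p t ∧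
      q (t + 1) = β₂ • q t + (1 - β₂) • ((sqNorm (p t))⁻¹ • (A t)ᵀ.mulVec (p t))) :
    ∀ t, frobNorm (A t - Matrix.vecMulVec (p (t + 1)) (q (t + 1)))
      ≤ frobNorm (A t - Matrix.vecMulVec (p t) (q t)) :=
  alada_alternating_error_monotone_general β₂ hβ₂0 hβ₂1 A p q heven hodd
end
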